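/- arXiv:1701.05820 — 3 statements merged into one kernel-verified Lean document; each statement's English description precedes it below -/
import Mathlib

section
/- Let $n \ge 2$ be even and let $a, b \in \mathbb{R}^n$ be unit vectors. Then there exists an orthogonal matrix $L \in O(n)$ such that $La = b$ and such that for every symmetric $n \times n$ real matrix $A$ one has $\sum_{i,k=1}^{n} L_{ki} A_{ki} = (a \cdot b)\, \mathrm{tr}(A)$; in particular, if $\mathrm{tr}(A) = 0$ then $\sum_{i,k} L_{ki} A_{ki} = 0$. -/
/-!
Write `b = c a + s u` with `c = a·b`, `u` a unit vector orthogonal to `a`, and `c² + s² = 1`.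
In even dimension the standard symplectic matrix `J` is an orthogonal complex structure
(`Jᵀ = -J`, `J² = -1`) sending one basis vector `eᵢ` to another `eⱼ`; conjugating by an orthogonal
`P` with `P eᵢ = a`, `P eⱼ = u` turns it into one sending `a` to `u`. Then `L = c + sJ` (a rotation
by the same angle in each `J`-invariant plane) is orthogonal, sends `a` to `b`, and has symmetric
part `c·1`, so its pairing with a symmetric `A` is `c tr A`.
-/

open Matrix Module
open scoped RealInnerProductSpace

theorem Matrix.sum_sum_mul_eq_mul_trace_of_add_transpose_eq {ι R : Type*} [Fintype ι]
    [DecidableEq ι] [CommRing R] [IsDomain R] [NeZero (2 : R)] {L A : Matrix ι ι R} {c : R}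
    (hL : L + Lᵀ = (2 * c) • 1) (hA : A.IsSymm) :
    ∑ k, ∑ i, L k i * A k i = c * A.trace := by
  have hswap : ∑ k, ∑ i, Lᵀ k i * A k i = ∑ k, ∑ i, L k i * A k i := by
    rw [Finset.sum_comm]
    simp only [transpose_apply, hA.apply]
  have hsum : ∑ k, ∑ i, (L + Lᵀ) k i * A k i = 2 * c * A.trace := by
    rw [hL]
    simp [one_apply, trace, Finset.mul_sum]
  apply mul_left_cancel₀ (two_ne_zero (α := R))
  simp only [add_apply, add_mul, Finset.sum_add_distrib, hswap] at hsum
  linear_combination hsum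

section ComplexStructure

variable {ι R : Type*} [DecidableEq ι] [CommRing R] {J : Matrix ι ι R}

theorem Matrix.smul_one_add_smul_add_transpose (hJt : Jᵀ = -J) (c s : R) :
    c • 1 + s • J + (c • 1 + s • J)ᵀ = (2 * c) • 1 := by
  simp only [transpose_add, transpose_smul, transpose_one, hJt]
  module

theorem Matrix.smul_one_add_smul_mem_orthogonalGroup [Fintype ι] (hJt : Jᵀ = -J)
    (hJJ : J * J = -1) {c s : R} (hcs : c ^ 2 + s ^ 2 = 1) :
    c • 1 + s • J ∈ orthogonalGroup ι R := by
  rw [mem_orthogonalGroup_iff']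
  simp only [transpose_add, transpose_smul, transpose_one, hJt, add_mul, mul_add, smul_mul_smul,
    one_mul, mul_one, smul_neg, neg_mul, hJJ]
  linear_combination (norm := module) hcs • (1 : Matrix ι ι R)

theorem Matrix.exists_transpose_eq_neg_mul_self_eq_neg_one_mulVec_single [Fintype ι] {l : Type*}
    [Fintype l] [DecidableEq l] (e : l ⊕ l ≃ ι) (k : l) :
    ∃ J : Matrix ι ι R, Jᵀ = -J ∧ J * J = -1 ∧
      J *ᵥ Pi.single (e (.inl k)) 1 = Pi.single (e (.inr k)) 1 := by
  refine ⟨reindex e e (Matrix.J l R), ?_, ?_, ?_⟩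
  · rw [reindex_apply, transpose_submatrix, J_transpose, submatrix_neg, Pi.neg_apply, Pi.neg_apply]
  · rw [reindex_apply, submatrix_mul_equiv, J_squared, submatrix_neg, Pi.neg_apply, Pi.neg_apply,
      submatrix_one_equiv]
  · ext x
    obtain ⟨y, rfl⟩ := e.surjective x
    rcases y with y | y <;> simp [Matrix.J, Pi.single_apply, one_apply, eq_comm]

end ComplexStructure

theorem Matrix.conj_add_transpose_conj_eq_smul_one {ι R : Type*} [Fintype ι] [DecidableEq ι]
    [CommRing R] {P M : Matrix ι ι R} {c : R} (hP : P * Pᵀ = 1) (hM : M + Mᵀ = c • 1) :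
    P * M * Pᵀ + (P * M * Pᵀ)ᵀ = c • 1 := by
  calc P * M * Pᵀ + (P * M * Pᵀ)ᵀ = P * (M + Mᵀ) * Pᵀ := by
        simp only [transpose_mul, transpose_transpose, mul_add, add_mul, Matrix.mul_assoc]
    _ = c • 1 := by rw [hM, Matrix.mul_smul, Matrix.mul_one, Matrix.smul_mul, hP]

section Euclidean

variable {E : Type*} [NormedAddCommGroup E] [InnerProductSpace ℝ E]

theorem exists_norm_eq_one_inner_eq_zero (hE : 2 ≤ finrank ℝ E) (a : E) :
    ∃ u : E, ‖u‖ = 1 ∧ ⟪a, u⟫ = 0 := by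
  have : FiniteDimensional ℝ E := Module.finite_of_finrank_pos (by omega)
  have hK : (ℝ ∙ a)ᗮ ≠ ⊥ := by
    rw [← Submodule.one_le_finrank_iff]
    have hsum := (ℝ ∙ a).finrank_add_finrank_orthogonal
    have hspan : finrank ℝ (ℝ ∙ a) ≤ 1 := by simpa using finrank_span_le_card (R := ℝ) ({a} : Set E)
    omega
  obtain ⟨w, hw, hw0⟩ := Submodule.exists_mem_ne_zero_of_ne_bot hK
  refine ⟨‖w‖⁻¹ • w, norm_smul_inv_norm hw0, ?_⟩
  rw [real_inner_smul_right, Submodule.mem_orthogonal_singleton_iff_inner_right.mp hw, mul_zero]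

theorem exists_eq_inner_smul_add_smul (hE : 2 ≤ finrank ℝ E) {a : E} (ha : ‖a‖ = 1) (b : E) :
    ∃ u : E, ∃ s : ℝ, ‖u‖ = 1 ∧ ⟪a, u⟫ = 0 ∧ b = ⟪a, b⟫ • a + s • u := by
  set w := b - ⟪a, b⟫ • a with hw_def
  have hbw : b = ⟪a, b⟫ • a + w := by rw [hw_def, add_sub_cancel]
  by_cases hw : w = 0
  · obtain ⟨u, hu, hau⟩ := exists_norm_eq_one_inner_eq_zero hE a
    exact ⟨u, 0, hu, hau, by rw [zero_smul, add_zero, ← sub_eq_zero, ← hw_def, hw]⟩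
  · refine ⟨‖w‖⁻¹ • w, ‖w‖, norm_smul_inv_norm hw, ?_, ?_⟩
    · rw [real_inner_smul_right, hw_def, inner_sub_right, real_inner_smul_right,
        real_inner_self_eq_norm_sq, ha]
      ring
    · rw [smul_inv_smul₀ (norm_ne_zero_iff.mpr hw), ← hbw]

theorem norm_smul_add_smul_sq_of_inner_eq_zero {a u : E} (ha : ‖a‖ = 1) (hu : ‖u‖ = 1)
    (hau : ⟪a, u⟫ = 0) (c s : ℝ) : ‖c • a + s • u‖ ^ 2 = c ^ 2 + s ^ 2 := by
  simp [norm_add_sq_real, norm_smul, real_inner_smul_left, real_inner_smul_right, ha, hu, hau]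

end Euclidean

theorem exists_mem_orthogonalGroup_mulVec_single_pair {ι : Type*} [Fintype ι] [DecidableEq ι]
    {i j : ι} (hij : i ≠ j) {a u : EuclideanSpace ℝ ι} (ha : ‖a‖ = 1) (hu : ‖u‖ = 1)
    (hau : ⟪a, u⟫ = 0) :
    ∃ P ∈ orthogonalGroup ι ℝ,
      P *ᵥ Pi.single i 1 = WithLp.ofLp a ∧ P *ᵥ Pi.single j 1 = WithLp.ofLp u := by
  set v : ι → EuclideanSpace ℝ ι := fun k => if k = i then a else u
  have hv : Orthonormal ℝ (({i, j} : Set ι).domRestrict v) := by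
    rw [orthonormal_iff_ite]
    rintro ⟨k, rfl | rfl⟩ ⟨l, rfl | rfl⟩ <;>
      simp [v, Set.domRestrict, Subtype.ext_iff, hij, hij.symm, ha, hu, hau, real_inner_comm a u]
  obtain ⟨B, hB⟩ := hv.exists_orthonormalBasis_extension_of_card_eq (by simp)
  have hcol : ∀ k, (EuclideanSpace.basisFun ι ℝ).toBasis.toMatrix B *ᵥ Pi.single k 1 =
      WithLp.ofLp (B k) := fun k => by ext; simp [Module.Basis.toMatrix_apply]
  refine ⟨_, (EuclideanSpace.basisFun ι ℝ).toMatrix_orthonormalBasis_mem_orthogonal B, ?_, ?_⟩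
  · rw [hcol, hB i (by simp)]
    simp [v]
  · rw [hcol, hB j (by simp)]
    simp [v, hij.symm]

theorem exists_mem_orthogonalGroup_add_transpose_eq_toEuclideanLin_eq {ι : Type*} [Fintype ι]
    [DecidableEq ι] {J : Matrix ι ι ℝ} (hJt : Jᵀ = -J) (hJJ : J * J = -1) {i j : ι}
    (hJij : J *ᵥ Pi.single i 1 = Pi.single j 1) {a u : EuclideanSpace ℝ ι} (ha : ‖a‖ = 1)
    (hu : ‖u‖ = 1) (hau : ⟪a, u⟫ = 0) {c s : ℝ} (hcs : c ^ 2 + s ^ 2 = 1) :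
    ∃ L ∈ orthogonalGroup ι ℝ, L + Lᵀ = (2 * c) • 1 ∧ toEuclideanLin L a = c • a + s • u := by
  have hij : i ≠ j := by
    rintro rfl
    have h : (J * J) *ᵥ Pi.single i (1 : ℝ) = Pi.single i 1 := by
      rw [← mulVec_mulVec, hJij, hJij]
    rw [hJJ, neg_mulVec, one_mulVec] at h
    have hi := congrFun h i
    norm_num at hi
  obtain ⟨P, hP, hPi, hPj⟩ := exists_mem_orthogonalGroup_mulVec_single_pair hij ha hu hau
  have hPa : Pᵀ *ᵥ WithLp.ofLp a = Pi.single i 1 := by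
    rw [← hPi, mulVec_mulVec, (mem_orthogonalGroup_iff' ..).mp hP, one_mulVec]
  refine ⟨P * (c • 1 + s • J) * Pᵀ, ?_, ?_, ?_⟩
  · exact mul_mem (mul_mem hP (smul_one_add_smul_mem_orthogonalGroup hJt hJJ hcs))
      (transpose_mem_unitaryGroup_iff.mpr hP)
  · exact conj_add_transpose_conj_eq_smul_one ((mem_orthogonalGroup_iff ..).mp hP)
      (smul_one_add_smul_add_transpose hJt c s)
  · rw [toLpLin_apply, ← mulVec_mulVec, ← mulVec_mulVec, hPa, add_mulVec, smul_mulVec,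
      smul_mulVec, one_mulVec, hJij, mulVec_add, mulVec_smul, mulVec_smul, hPi, hPj]
    rfl

/-- For `n ≥ 2` even and unit vectors `a, b ∈ ℝⁿ`, there is an orthogonal matrix `L ∈ O(n)` with
`La = b` and `∑_{i,k} L_{ki} A_{ki} = (a·b) tr A` for every symmetric matrix `A`; in particular
the sum vanishes for trace-free symmetric `A`. -/
theorem exists_orthogonal_contraction
    {n : ℕ} (hn : 2 ≤ n) (hne : Even n)
    (a b : EuclideanSpace ℝ (Fin n)) (ha : ‖a‖ = 1) (hb : ‖b‖ = 1) :
    ∃ L : Matrix (Fin n) (Fin n) ℝ, L ∈ Matrix.orthogonalGroup (Fin n) ℝ ∧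
      Matrix.toEuclideanLin L a = b ∧
      ∀ A : Matrix (Fin n) (Fin n) ℝ, A.IsSymm →
        ∑ k, ∑ i, L k i * A k i = ⟪a, b⟫ * A.trace := by
  obtain ⟨m, rfl⟩ := hne
  obtain ⟨J, hJt, hJJ, hJ⟩ :=
    exists_transpose_eq_neg_mul_self_eq_neg_one_mulVec_single (R := ℝ) finSumFinEquiv
      (⟨0, by omega⟩ : Fin m)
  obtain ⟨u, s, hu, hau, hab⟩ := exists_eq_inner_smul_add_smul (by simpa using hn) ha b
  have hcs : ⟪a, b⟫ ^ 2 + s ^ 2 = 1 := by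
    rw [← norm_smul_add_smul_sq_of_inner_eq_zero ha hu hau, ← hab, hb, one_pow]
  obtain ⟨L, hL, hLt, hLa⟩ :=
    exists_mem_orthogonalGroup_add_transpose_eq_toEuclideanLin_eq hJt hJJ hJ ha hu hau hcs
  exact ⟨L, hL, hLa.trans hab.symm,
    fun A hA => sum_sum_mul_eq_mul_trace_of_add_transpose_eq hLt hA⟩
end

section
/- Let $n \ge 2$, let $u$ be three times continuously differentiable on a neighborhood of $x \in \mathbb{R}^n$ with $Du(x) \ne 0$, and let $a > 0$. Suppose there exist constants $C \ge 0$ and $r > 0$ such that for every $y$ with $|y - x| \le r$ and $u(y) = u(x)$ one has $(Du(y) - Du(x)) \cdot (y - x) + a|y - x|^2 \le C|y - x|^3$. Then $\min \{ -v^{T} D^2u(x)\, v : v \in \mathbb{R}^n,\ |v| = 1,\ v \cdot Du(x) = 0 \} \ge a$; that is, $|Du(x)|\,\kappa_1(x) \ge a$, where $\kappa_1(x)$ is the smallest principal curvature of the level set of $u$ through $x$. -/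
/-!
For a unit vector `v ⊥ Du(x)`, the implicit function theorem gives a curve `γ` in the level set
of `u` through `x` with `γ 0 = x` and `γ' 0 = v`. Divide the two-point inequality at `y = γ t`
by `t²`: the quotients `(γ t - x) / t` and `(Du(γ t) - Du(x)) / t` tend to `v` and `D²u(x) v`,
the right-hand side is `O(t)`, so letting `t → 0⁺` gives `D²u(x)(v, v) + a ≤ 0`.
-/

open scoped RealInnerProductSpace
open Filter Topology Module

theorem exists_norm_eq_one_inner_eq_zero_s8 {E : Type*} [NormedAddCommGroup E]
    [InnerProductSpace ℝ E] [FiniteDimensional ℝ E] (hE : 2 ≤ finrank ℝ E) (g : E) :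
    ∃ v : E, ‖v‖ = 1 ∧ ⟪v, g⟫ = 0 := by
  have hspan : finrank ℝ (ℝ ∙ g) ≤ 1 := by
    simpa using finrank_span_le_card (R := ℝ) ({g} : Set E)
  have hpos : 0 < finrank ℝ (ℝ ∙ g)ᗮ := by
    have := (ℝ ∙ g).finrank_add_finrank_orthogonal
    omega
  obtain ⟨⟨w, hw⟩, hne⟩ := finrank_pos_iff_exists_ne_zero.mp hpos
  have hw0 : w ≠ 0 := fun h => hne (Subtype.ext h)
  refine ⟨‖w‖⁻¹ • w, norm_smul_inv_norm hw0, ?_⟩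
  rw [real_inner_smul_left, real_inner_comm,
    (Submodule.mem_orthogonal_singleton_iff_inner_right).mp hw, mul_zero]

theorem inner_gradient_eq_fderiv {E : Type*} [NormedAddCommGroup E] [InnerProductSpace ℝ E]
    [CompleteSpace E] (u : E → ℝ) (y w : E) : ⟪gradient u y, w⟫ = fderiv ℝ u y w := by
  rw [← toDual_gradient, InnerProductSpace.toDual_apply_apply]

theorem fderiv_clm_apply_const {E F G : Type*} [NormedAddCommGroup E] [NormedSpace ℝ E]
    [NormedAddCommGroup F] [NormedSpace ℝ F] [NormedAddCommGroup G] [NormedSpace ℝ G]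
    {c : E → F →L[ℝ] G} {x : E} (hc : DifferentiableAt ℝ c x) (v : F) (w : E) :
    fderiv ℝ (fun y => c y v) x w = fderiv ℝ c x w v := by
  rw [fderiv_clm_apply hc (differentiableAt_const v)]
  simp

theorem HasStrictFDerivAt.exists_curve_in_level_set
    {E : Type*} [NormedAddCommGroup E] [NormedSpace ℝ E] [CompleteSpace E]
    {f : E → ℝ} {f' : E →L[ℝ] ℝ} {a v : E} (hf : HasStrictFDerivAt f f' a) (hf' : f' ≠ 0)
    (hv : f' v = 0) :
    ∃ γ : ℝ → E, γ 0 = a ∧ HasDerivAt γ v 0 ∧ ∀ᶠ t in 𝓝 0, f (γ t) = f a := by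
  have hrange : LinearMap.range (f' : E →ₗ[ℝ] ℝ) = ⊤ :=
    LinearMap.range_eq_top.mpr (LinearMap.surjective (f := (f' : Module.Dual ℝ E))
      fun h => hf' (ContinuousLinearMap.coe_injective h))
  let w : LinearMap.ker (f' : E →ₗ[ℝ] ℝ) := ⟨v, hv⟩
  have hw : HasDerivAt (fun t : ℝ => t • w) w 0 := by
    simpa using (hasDerivAt_id (0 : ℝ)).smul_const w
  refine ⟨fun t => hf.implicitFunction f f' hrange (f a) (t • w), by simp, ?_, ?_⟩
  · exact ((hf.to_implicitFunction hrange).hasFDerivAt.comp_hasDerivAt_of_eq (0 : ℝ) hw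
      (zero_smul ℝ w).symm).congr_deriv rfl
  · exact (tendsto_const_nhds.prodMk_nhds (by simpa using hw.continuousAt.tendsto)).eventually
      (hf.map_implicitFunction_eq hrange)

theorem HasFDerivAt.apply_apply_add_mul_norm_sq_nonpos
    {E : Type*} [NormedAddCommGroup E] [NormedSpace ℝ E]
    {f : E → E →L[ℝ] ℝ} {H : E →L[ℝ] E →L[ℝ] ℝ} {γ : ℝ → E} {x v : E} {a C : ℝ}
    (hf : HasFDerivAt f H x) (hγ : HasDerivAt γ v 0) (hγ0 : γ 0 = x)
    (hle : ∀ᶠ t in 𝓝[>] 0,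
      (f (γ t) - f x) (γ t - x) + a * ‖γ t - x‖ ^ 2 ≤ C * ‖γ t - x‖ ^ 3) :
    H v v + a * ‖v‖ ^ 2 ≤ 0 := by
  subst hγ0
  have hq : Tendsto (fun t => t⁻¹ • (γ t - γ 0)) (𝓝[>] 0) (𝓝 v) := by
    simpa using hγ.tendsto_slope_zero_right
  have hd : Tendsto (fun t => t⁻¹ • (f (γ t) - f (γ 0))) (𝓝[>] 0) (𝓝 (H v)) := by
    simpa using (hf.comp_hasDerivAt (0 : ℝ) hγ).tendsto_slope_zero_right
  have hlhs : Tendsto (fun t : ℝ => (t⁻¹ • (f (γ t) - f (γ 0))) (t⁻¹ • (γ t - γ 0)) +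
      a * ‖t⁻¹ • (γ t - γ 0)‖ ^ 2) (𝓝[>] 0) (𝓝 (H v v + a * ‖v‖ ^ 2)) :=
    (((continuous_fst.clm_apply continuous_snd).tendsto (H v, v)).comp
      (hd.prodMk_nhds hq)).add ((hq.norm.pow 2).const_mul a)
  have hrhs : Tendsto (fun t : ℝ => C * t * ‖t⁻¹ • (γ t - γ 0)‖ ^ 3) (𝓝[>] 0) (𝓝 0) := by
    simpa using (tendsto_nhdsWithin_of_tendsto_nhds (tendsto_id (x := 𝓝 (0 : ℝ)))).const_mul C
      |>.mul (hq.norm.pow 3)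
  refine le_of_tendsto_of_tendsto hlhs hrhs ?_
  filter_upwards [hle, self_mem_nhdsWithin] with t ht (htpos : 0 < t)
  have hscaled := mul_le_mul_of_nonneg_left ht (sq_nonneg t⁻¹)
  simp only [smul_apply, map_smul, smul_eq_mul, norm_smul, norm_inv,
    Real.norm_of_nonneg htpos.le]
  field_simp at hscaled ⊢
  linarith

theorem curvature_lower_bound_of_two_point_estimate_general
    {n : ℕ} (hn : 2 ≤ n)
    (u : EuclideanSpace ℝ (Fin n) → ℝ)
    (W : Set (EuclideanSpace ℝ (Fin n))) (hW : IsOpen W)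
    (x : EuclideanSpace ℝ (Fin n)) (hxW : x ∈ W)
    (hu : ContDiffOn ℝ 3 u W)
    (hgrad : gradient u x ≠ 0)
    (a : ℝ)
    (C r : ℝ) (hr : 0 < r)
    (hyp : ∀ y, ‖y - x‖ ≤ r → u y = u x →
      ⟪gradient u y - gradient u x, y - x⟫ + a * ‖y - x‖ ^ 2 ≤ C * ‖y - x‖ ^ 3) :
    a ≤ sInf {s : ℝ | ∃ v : EuclideanSpace ℝ (Fin n), ‖v‖ = 1 ∧ ⟪v, gradient u x⟫ = 0 ∧
      s = -(fderiv ℝ (fun y => fderiv ℝ u y v) x v)} := by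
  have hu₃ : ContDiffAt ℝ 3 u x := hu.contDiffAt (hW.mem_nhds hxW)
  have hDu : DifferentiableAt ℝ (fderiv ℝ u) x :=
    (hu₃.fderiv_right (m := 2) (by norm_num)).differentiableAt (by norm_num)
  have hDu₀ : fderiv ℝ u x ≠ 0 := fun h => hgrad <|
    inner_self_eq_zero.mp (by rw [inner_gradient_eq_fderiv, h, zero_apply])
  refine le_csInf ?_ ?_
  · obtain ⟨v, hv, hvg⟩ := exists_norm_eq_one_inner_eq_zero_s8 (by simpa using hn) (gradient u x)
    exact ⟨_, v, hv, hvg, rfl⟩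
  rintro _ ⟨v, hv, hvg, rfl⟩
  obtain ⟨γ, hγ0, hγ, hlevel⟩ := (hu₃.hasStrictFDerivAt (by norm_num)).exists_curve_in_level_set
    hDu₀ (by rwa [← inner_gradient_eq_fderiv, real_inner_comm])
  have hnear : ∀ᶠ t in 𝓝 0, γ t ∈ Metric.closedBall x r :=
    hγ0 ▸ hγ.continuousAt.tendsto.eventually (Metric.closedBall_mem_nhds _ hr)
  have key := hDu.hasFDerivAt.apply_apply_add_mul_norm_sq_nonpos hγ hγ0 <|
    nhdsWithin_le_nhds <| (hnear.and hlevel).mono fun t ⟨htr, htu⟩ => by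
      simpa only [inner_sub_left, inner_gradient_eq_fderiv, sub_apply]
        using hyp (γ t) (mem_closedBall_iff_norm.mp htr) htu
  rw [hv, one_pow, mul_one] at key
  linarith [fderiv_clm_apply_const hDu v v]

/-- If `u` is `C³` near `x` with `Du(x) ≠ 0`, `a > 0`, and
`(Du(y) - Du(x))·(y - x) + a|y-x|² ≤ C|y-x|³` for all nearby `y` on the level set of `x`, then
`min { -vᵀ D²u(x) v : |v| = 1, v ⊥ Du(x) } ≥ a`, i.e. `|Du(x)| κ₁(x) ≥ a`. -/
theorem curvature_lower_bound_of_two_point_estimate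
    {n : ℕ} (hn : 2 ≤ n)
    (u : EuclideanSpace ℝ (Fin n) → ℝ)
    (W : Set (EuclideanSpace ℝ (Fin n))) (hW : IsOpen W)
    (x : EuclideanSpace ℝ (Fin n)) (hxW : x ∈ W)
    (hu : ContDiffOn ℝ 3 u W)
    (hgrad : gradient u x ≠ 0)
    (a : ℝ) (ha : 0 < a)
    (C r : ℝ) (hC : 0 ≤ C) (hr : 0 < r) (hball : Metric.closedBall x r ⊆ W)
    (hyp : ∀ y, ‖y - x‖ ≤ r → u y = u x →
      ⟪gradient u y - gradient u x, y - x⟫ + a * ‖y - x‖ ^ 2 ≤ C * ‖y - x‖ ^ 3) :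
    a ≤ sInf {s : ℝ | ∃ v : EuclideanSpace ℝ (Fin n), ‖v‖ = 1 ∧ ⟪v, gradient u x⟫ = 0 ∧
      s = -(fderiv ℝ (fun y => fderiv ℝ u y v) x v)} :=
  curvature_lower_bound_of_two_point_estimate_general hn u W hW x hxW hu hgrad a C r hr hyp
end

section
/- Let $n \ge 2$, let $u$ be three times continuously differentiable on a neighborhood of $x \in \mathbb{R}^n$ with $Du(x) \ne 0$, and let $a > 0$. Suppose $\min \{ -v^{T} D^2u(x)\, v : v \in \mathbb{R}^n,\ |v| = 1,\ v \cdot Du(x) = 0 \} \ge a$, i.e. $|Du(x)|\,\kappa_1(x) \ge a$ where $\kappa_1(x)$ is the smallest principal curvature of the level set of $u$ through $x$. Then there exist constants $C \ge 0$ and $r > 0$ such that for every $y$ with $|y - x| \le r$ and $u(y) = u(x)$ one has $(Du(y) - Du(x)) \cdot (y - x) + a|y - x|^2 \le C|y - x|^3$. -/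
/-!
Write `g = ∇u(x)`, `H = D(∇u)(x)` and `w = y - x`. Taylor's formula to second order for `u` and
for `∇u` gives `u(y) - u(x) = ⟪g, w⟫ + O(|w|²)` and `∇u(y) - ∇u(x) = H w + O(|w|²)`. On the
level set the first says that `w` is tangent up to `O(|w|²)`: its component along `g` is
`O(|w|²)`. Splitting `w` into that component and a part orthogonal to `g`, on which
`⟪H p, p⟫ ≤ -a |p|²` by the curvature hypothesis, every other term of `⟪H w, w⟫ + a |w|²` is
`O(|w|³)`.
-/

open scoped RealInnerProductSpace Topology
open Asymptotics Filter Metric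

theorem ContDiffAt.isBigO_sub_sub_fderiv {E F : Type*} [NormedAddCommGroup E] [NormedSpace ℝ E]
    [NormedAddCommGroup F] [NormedSpace ℝ F] {f : E → F} {x : E} (hf : ContDiffAt ℝ 2 f x) :
    (fun y => f y - f x - fderiv ℝ f x (y - x)) =O[𝓝 x] fun y => ‖y - x‖ ^ 2 := by
  obtain ⟨K, t, ht, hK⟩ := (hf.fderiv_right (m := 1) le_rfl).exists_lipschitzOnWith
  have hdiff : ∀ᶠ z in 𝓝 x, DifferentiableAt ℝ f z :=
    (hf.eventually (by simp)).mono fun z hz => hz.differentiableAt (by simp)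
  obtain ⟨ε, hε, hball⟩ := Metric.mem_nhds_iff.1 (inter_mem ht hdiff)
  refine .of_bound K ?_
  filter_upwards [ball_mem_nhds x hε] with y hy
  have hsub : closedBall x ‖y - x‖ ⊆ ball x ε :=
    closedBall_subset_ball (by rwa [mem_ball, dist_eq_norm] at hy)
  have hbound : ∀ z ∈ closedBall x ‖y - x‖, ‖fderiv ℝ f z - fderiv ℝ f x‖ ≤ K * ‖y - x‖ :=
    fun z hz => (hK.norm_sub_le (hball (hsub hz)).1 (mem_of_mem_nhds ht)).trans
      (by gcongr; rwa [mem_closedBall, dist_eq_norm] at hz)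
  have := (convex_closedBall x ‖y - x‖).norm_image_sub_le_of_norm_fderiv_le'
    (fun z hz => (hball (hsub hz)).2) hbound (mem_closedBall_self (norm_nonneg _))
    (by rw [mem_closedBall, dist_eq_norm])
  simpa [sq, mul_assoc] using this

section InnerProductSpace

variable {E : Type*} [NormedAddCommGroup E] [InnerProductSpace ℝ E]

theorem abs_real_inner_map_le (H : E →L[ℝ] E) (v w : E) : |⟪H v, w⟫| ≤ ‖H‖ * ‖v‖ * ‖w‖ :=
  (abs_real_inner_le_norm _ _).trans (by gcongr; exact H.le_opNorm v)

theorem inner_map_self_le_of_le_sInf (H : E →L[ℝ] E) (g : E) {a : ℝ}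
    (h : a ≤ sInf {s : ℝ | ∃ v : E, ‖v‖ = 1 ∧ ⟪v, g⟫ = 0 ∧ s = -⟪H v, v⟫})
    (p : E) (hp : ⟪p, g⟫ = 0) : ⟪H p, p⟫ ≤ -a * ‖p‖ ^ 2 := by
  rcases eq_or_ne p 0 with rfl | hp0
  · simp
  have hbdd : BddBelow {s : ℝ | ∃ v : E, ‖v‖ = 1 ∧ ⟪v, g⟫ = 0 ∧ s = -⟪H v, v⟫} := by
    refine ⟨-‖H‖, ?_⟩
    rintro _ ⟨v, hv, -, rfl⟩
    simpa [hv] using neg_le_neg ((le_abs_self _).trans (abs_real_inner_map_le H v v))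
  have hunit := h.trans <| csInf_le hbdd ⟨‖p‖⁻¹ • p, norm_smul_inv_norm hp0, by
    rw [real_inner_smul_left, hp, mul_zero], rfl⟩
  rw [map_smul, real_inner_smul_left, real_inner_smul_right, ← mul_assoc, ← sq,
    inv_pow, le_neg, ← div_eq_inv_mul, div_le_iff₀ (pow_pos (norm_pos_iff.2 hp0) 2)] at hunit
  exact hunit

theorem inner_map_self_add_mul_norm_sq_le (H : E →L[ℝ] E) {e : E} (he : ‖e‖ = 1) {a : ℝ}
    (hH : ∀ p, ⟪p, e⟫ = 0 → ⟪H p, p⟫ ≤ -a * ‖p‖ ^ 2) (w : E) :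
    ⟪H w, w⟫ + a * ‖w‖ ^ 2 ≤ 2 * ‖H‖ * |⟪e, w⟫| * ‖w‖ + a * ⟪e, w⟫ ^ 2 := by
  set s := ⟪e, w⟫
  set p := w - s • e
  have hp : ⟪p, e⟫ = 0 := by
    rw [inner_sub_left, real_inner_smul_left, real_inner_self_eq_norm_sq, he, real_inner_comm]
    ring
  have hpyth : ‖w‖ ^ 2 = ‖p‖ ^ 2 + s ^ 2 := by
    have : w = p + s • e := by simp [p]
    rw [this, norm_add_sq_real, real_inner_smul_right, hp, norm_smul, he]
    simp
  have hpw : ‖p‖ ≤ ‖w‖ := by nlinarith [norm_nonneg p, norm_nonneg w]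
  have hdiff : ⟪H w, w⟫ - ⟪H p, p⟫ = s * ⟪H w, e⟫ + s * ⟪H e, p⟫ := by
    simp only [p, map_sub, map_smul, inner_sub_left, inner_sub_right, real_inner_smul_left,
      real_inner_smul_right]
    ring
  have h1 : s * ⟪H w, e⟫ ≤ |s| * (‖H‖ * ‖w‖) :=
    calc s * ⟪H w, e⟫ ≤ |s| * |⟪H w, e⟫| := (le_abs_self _).trans (abs_mul _ _).le
      _ ≤ |s| * (‖H‖ * ‖w‖) := by gcongr; simpa [he] using abs_real_inner_map_le H w e
  have h2 : s * ⟪H e, p⟫ ≤ |s| * (‖H‖ * ‖w‖) :=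
    calc s * ⟪H e, p⟫ ≤ |s| * |⟪H e, p⟫| := (le_abs_self _).trans (abs_mul _ _).le
      _ ≤ |s| * (‖H‖ * ‖p‖) := by gcongr; simpa [he] using abs_real_inner_map_le H e p
      _ ≤ |s| * (‖H‖ * ‖w‖) := by gcongr
  linear_combination hdiff + h1 + h2 + hH p hp + a * hpyth

theorem inner_add_mul_norm_sq_le_mul_norm_pow_three (H : E →L[ℝ] E) {e : E} (he : ‖e‖ = 1)
    {a : ℝ} (hH : ∀ p, ⟪p, e⟫ = 0 → ⟪H p, p⟫ ≤ -a * ‖p‖ ^ 2) {w d : E} {C c : ℝ}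
    (hd : ‖d - H w‖ ≤ C * ‖w‖ ^ 2) (hc : |⟪e, w⟫| ≤ c * ‖w‖ ^ 2) (hw : ‖w‖ ≤ 1) :
    ⟪d, w⟫ + a * ‖w‖ ^ 2 ≤ (C + 2 * ‖H‖ * c + |a| * c ^ 2) * ‖w‖ ^ 3 := by
  have hrem : ⟪d - H w, w⟫ ≤ C * ‖w‖ ^ 3 :=
    (real_inner_le_norm _ _).trans (by nlinarith [norm_nonneg w])
  have hquad := inner_map_self_add_mul_norm_sq_le H he hH w
  have hpar : a * ⟪e, w⟫ ^ 2 ≤ |a| * c ^ 2 * ‖w‖ ^ 3 := by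
    have : ⟪e, w⟫ ^ 2 ≤ (c * ‖w‖ ^ 2) ^ 2 := by
      rw [← sq_abs]; gcongr
    have h4 : ‖w‖ ^ 4 ≤ ‖w‖ ^ 3 := pow_le_pow_of_le_one (norm_nonneg w) hw (by norm_num)
    calc a * ⟪e, w⟫ ^ 2 ≤ |a| * ⟪e, w⟫ ^ 2 := by gcongr; exact le_abs_self a
      _ ≤ |a| * (c ^ 2 * ‖w‖ ^ 4) := by gcongr; linarith
      _ ≤ |a| * c ^ 2 * ‖w‖ ^ 3 := by rw [mul_assoc]; gcongr
  have hmix : 2 * ‖H‖ * |⟪e, w⟫| * ‖w‖ ≤ 2 * ‖H‖ * c * ‖w‖ ^ 3 := by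
    have := mul_le_mul_of_nonneg_left hc (by positivity : (0:ℝ) ≤ 2 * ‖H‖ * ‖w‖)
    linear_combination this
  have hsplit : ⟪d, w⟫ = ⟪d - H w, w⟫ + ⟪H w, w⟫ := by rw [inner_sub_left]; ring
  linear_combination hsplit + hrem + hquad + hpar + hmix

variable [CompleteSpace E]

theorem ContDiffAt.gradient {f : E → ℝ} {x : E} {n : WithTop ℕ∞}
    (hf : ContDiffAt ℝ (n + 1) f x) :
    ContDiffAt ℝ n (gradient f) x :=
  (InnerProductSpace.toDual ℝ E).symm.contDiff.comp_contDiffAt x (hf.fderiv_right le_rfl)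

theorem fderiv_fderiv_apply_eq_inner_fderiv_gradient {f : E → ℝ} {x : E}
    (hf : DifferentiableAt ℝ (gradient f) x) (v w : E) :
    fderiv ℝ (fun y => fderiv ℝ f y v) x w = ⟪fderiv ℝ (gradient f) x w, v⟫ := by
  have h : (fun y => fderiv ℝ f y v) = fun y => ⟪gradient f y, v⟫ :=
    funext fun y => inner_gradient_left.symm
  rw [h, fderiv_inner_apply ℝ hf (differentiableAt_const v)]
  simp

end InnerProductSpace

theorem two_point_estimate_of_curvature_lower_bound_general
    {n : ℕ}
    (u : EuclideanSpace ℝ (Fin n) → ℝ)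
    (W : Set (EuclideanSpace ℝ (Fin n))) (hW : IsOpen W)
    (x : EuclideanSpace ℝ (Fin n)) (hxW : x ∈ W)
    (hu : ContDiffOn ℝ 3 u W)
    (hgrad : gradient u x ≠ 0)
    (a : ℝ)
    (hcurv : a ≤ sInf {s : ℝ | ∃ v : EuclideanSpace ℝ (Fin n), ‖v‖ = 1 ∧
      ⟪v, gradient u x⟫ = 0 ∧ s = -(fderiv ℝ (fun y => fderiv ℝ u y v) x v)}) :
    ∃ C r : ℝ, 0 ≤ C ∧ 0 < r ∧ Metric.closedBall x r ⊆ W ∧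
      ∀ y, ‖y - x‖ ≤ r → u y = u x →
        ⟪gradient u y - gradient u x, y - x⟫ + a * ‖y - x‖ ^ 2 ≤ C * ‖y - x‖ ^ 3 := by
  have hux : ContDiffAt ℝ 3 u x := hu.contDiffAt (hW.mem_nhds hxW)
  have hGx : ContDiffAt ℝ 2 (gradient u) x := hux.gradient
  set g := gradient u x
  set H := fderiv ℝ (gradient u) x
  set e := ‖g‖⁻¹ • g
  have hg : 0 < ‖g‖ := norm_pos_iff.2 hgrad
  have he : ‖e‖ = 1 := norm_smul_inv_norm hgrad
  simp_rw [fderiv_fderiv_apply_eq_inner_fderiv_gradient (hGx.differentiableAt (by norm_num))]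
    at hcurv
  have hH : ∀ p, ⟪p, e⟫ = 0 → ⟪H p, p⟫ ≤ -a * ‖p‖ ^ 2 := fun p hp =>
    inner_map_self_le_of_le_sInf H g hcurv p <| by
      rwa [real_inner_smul_right, mul_eq_zero, or_iff_right (inv_ne_zero hg.ne')] at hp
  obtain ⟨C₁, hC₁, hu₂⟩ := (hux.of_le (by norm_num)).isBigO_sub_sub_fderiv.exists_nonneg
  obtain ⟨C₂, hC₂, hG₂⟩ := hGx.isBigO_sub_sub_fderiv.exists_nonneg
  obtain ⟨r, hr, hball⟩ := nhds_basis_closedBall.eventually_iff.1 <|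
    hu₂.bound.and <| hG₂.bound.and <| (hW.eventually_mem hxW).and <|
      closedBall_mem_nhds x one_pos
  refine ⟨C₂ + 2 * ‖H‖ * (C₁ / ‖g‖) + |a| * (C₁ / ‖g‖) ^ 2, r, by positivity, hr,
    fun y hy => (hball hy).2.2.1, fun y hy hyu => ?_⟩
  obtain ⟨hTu, hTG, -, hy1⟩ := hball (mem_closedBall_iff_norm.2 hy)
  simp only [norm_pow, norm_norm] at hTu hTG
  have hlevel : |⟪e, y - x⟫| ≤ C₁ / ‖g‖ * ‖y - x‖ ^ 2 := by
    rw [hyu, sub_self, zero_sub, norm_neg, ← inner_gradient_left, Real.norm_eq_abs] at hTu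
    rw [real_inner_smul_left, abs_mul, abs_inv, abs_norm, div_mul_eq_mul_div,
      inv_mul_le_iff₀ hg, mul_div_cancel₀ _ hg.ne']
    exact hTu
  exact inner_add_mul_norm_sq_le_mul_norm_pow_three H he hH hTG hlevel (mem_closedBall_iff_norm.1 hy1)

/-- If `u` is `C³` near `x` with `Du(x) ≠ 0`, `a > 0`, and
`min { -vᵀ D²u(x) v : |v| = 1, v ⊥ Du(x) } ≥ a` (i.e. `|Du(x)| κ₁(x) ≥ a`), then there exist
`C ≥ 0` and `r > 0` such that `(Du(y) - Du(x))·(y - x) + a|y-x|² ≤ C|y-x|³` for every `y` with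
`|y - x| ≤ r` lying on the level set of `u` through `x`. -/
theorem two_point_estimate_of_curvature_lower_bound
    {n : ℕ} (hn : 2 ≤ n)
    (u : EuclideanSpace ℝ (Fin n) → ℝ)
    (W : Set (EuclideanSpace ℝ (Fin n))) (hW : IsOpen W)
    (x : EuclideanSpace ℝ (Fin n)) (hxW : x ∈ W)
    (hu : ContDiffOn ℝ 3 u W)
    (hgrad : gradient u x ≠ 0)
    (a : ℝ) (ha : 0 < a)
    (hcurv : a ≤ sInf {s : ℝ | ∃ v : EuclideanSpace ℝ (Fin n), ‖v‖ = 1 ∧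
      ⟪v, gradient u x⟫ = 0 ∧ s = -(fderiv ℝ (fun y => fderiv ℝ u y v) x v)}) :
    ∃ C r : ℝ, 0 ≤ C ∧ 0 < r ∧ Metric.closedBall x r ⊆ W ∧
      ∀ y, ‖y - x‖ ≤ r → u y = u x →
        ⟪gradient u y - gradient u x, y - x⟫ + a * ‖y - x‖ ^ 2 ≤ C * ‖y - x‖ ^ 3 :=
  two_point_estimate_of_curvature_lower_bound_general u W hW x hxW hu hgrad a hcurv
end
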